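/- (Greenwell–Lovász) If G is a connected graph with χ(G) > n, then the categorical product G · Kₙ is uniquely n-colorable: χ(G · Kₙ) = n and every proper n-coloring of G · Kₙ equals the projection (v,i) ↦ i up to a permutation of colors. -/

import Mathlib

/-!
Let `c` be a proper `n`-colouring of `G · Kₙ` and call the map `i ↦ c (v, i)` the
fibre of `c` at `v`. If the fibre at `v` repeats a colour `a`, then no neighbour `w` of `v` can use
`a` anywhere in its fibre, since every `(w, k)` is adjacent to one of the two copies of `a`. So a
non-injective fibre forces non-injective fibres at all neighbours, hence everywhere by
connectivity, and picking a repeated colour at each vertex would colour `G` with `n` colours.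
Hence every fibre is a permutation, and adjacent fibres agree because `(u, j)` and `(v, i)` are
adjacent for `j ≠ i`; so all fibres equal one permutation `σ`. Applied to a colouring with fewer
than `n` colours this gives a contradiction, so `χ(G · Kₙ) = n`.
-/

open SimpleGraph

def properCol {V : Type*} (G : SimpleGraph V) (s : ℕ) (c : V → Fin s) : Prop :=
  ∀ ⦃u v⦄, G.Adj u v → c u ≠ c v

noncomputable def chrom {V : Type*} [Fintype V] (G : SimpleGraph V) : ℕ :=
  sInf {s | ∃ c : V → Fin s, properCol G s c}

def IsForcingSet {V : Type*} [Fintype V] (G : SimpleGraph V) (D : Finset V) : Prop :=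
  ∃ p : V → Fin (chrom G), ∃! c : V → Fin (chrom G),
    properCol G (chrom G) c ∧ ∀ v ∈ D, c v = p v

noncomputable def Fchi {V : Type*} [Fintype V] (G : SimpleGraph V) : ℕ :=
  sInf {k | ∃ D : Finset V, D.card = k ∧ IsForcingSet G D}

noncomputable def Npart {V : Type*} (G : SimpleGraph V) (s : ℕ) : ℕ :=
  Nat.card {r : V → V → Prop // ∃ c : V → Fin s,
    properCol G s c ∧ r = fun u v => c u = c v}

def tensorProd {V W : Type*} (G : SimpleGraph V) (H : SimpleGraph W) :
    SimpleGraph (V × W) where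
  Adj x y := G.Adj x.1 y.1 ∧ H.Adj x.2 y.2
  symm := ⟨fun _ _ h => ⟨h.1.symm, h.2.symm⟩⟩
  loopless := ⟨fun x h => G.loopless.irrefl x.1 h.1⟩

theorem SimpleGraph.Connected.forall_of_adj_imp {V : Type*} {G : SimpleGraph V}
    (hG : G.Connected) {P : V → Prop} (hP : ∀ ⦃u v⦄, G.Adj u v → P u → P v) {u : V}
    (hu : P u) (v : V) : P v := by
  obtain ⟨p⟩ := hG u v
  induction p with
  | nil => exact hu
  | cons h _ ih => exact ih (hP h hu)

section Chrom

variable {V : Type*} [Fintype V] {G : SimpleGraph V} {s : ℕ} {c : V → Fin s}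

theorem chrom_le_of_properCol (hc : properCol G s c) : chrom G ≤ s :=
  Nat.sInf_le ⟨c, hc⟩

theorem exists_properCol_chrom (hc : properCol G s c) : ∃ c' : V → Fin (chrom G),
    properCol G (chrom G) c' :=
  Nat.sInf_mem (s := {s | ∃ c : V → Fin s, properCol G s c}) ⟨s, c, hc⟩

end Chrom

theorem properCol.castLE {V : Type*} {G : SimpleGraph V} {s t : ℕ} {c : V → Fin s}
    (hc : properCol G s c) (hst : s ≤ t) : properCol G t (Fin.castLE hst ∘ c) :=
  fun _ _ huv heq => hc huv (Fin.castLE_injective hst heq)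

theorem properCol_tensorProd_top_snd {V : Type*} (G : SimpleGraph V) (n : ℕ) :
    properCol (tensorProd G (⊤ : SimpleGraph (Fin n))) n Prod.snd :=
  fun _ _ h => h.2

namespace properCol

variable {V : Type*} {G : SimpleGraph V} {n : ℕ} {c : V × Fin n → Fin n}
  (hc : properCol (tensorProd G (⊤ : SimpleGraph (Fin n))) n c)
include hc

theorem ne_of_fiber_eq {u v : V} (huv : G.Adj u v) {i j : Fin n} (hij : i ≠ j)
    (heq : c (u, i) = c (u, j)) (k : Fin n) : c (v, k) ≠ c (u, i) := by
  by_cases hki : k = i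
  · subst hki
    rw [heq]
    exact hc (u := (v, k)) (v := (u, j)) ⟨huv.symm, hij⟩
  · exact hc (u := (v, k)) (v := (u, i)) ⟨huv.symm, hki⟩

theorem not_injective_fiber_of_adj {u v : V} (huv : G.Adj u v)
    (hu : ¬ Function.Injective fun i => c (u, i)) : ¬ Function.Injective fun i => c (v, i) := by
  obtain ⟨i, j, heq, hij⟩ := Function.not_injective_iff.mp hu
  intro hv
  obtain ⟨k, hk⟩ := Finite.injective_iff_surjective.mp hv (c (u, i))
  exact hc.ne_of_fiber_eq huv hij heq k hk

theorem fiber_eq_of_adj {u v : V} (huv : G.Adj u v)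
    (hu : Function.Surjective fun i => c (u, i)) (i : Fin n) : c (v, i) = c (u, i) := by
  obtain ⟨j, hj⟩ := hu (c (v, i))
  by_cases hji : j = i
  · rw [← hj, hji]
  · exact absurd hj (hc (u := (u, j)) (v := (v, i)) ⟨huv, hji⟩)

theorem exists_properCol_of_not_injective_fiber
    (h : ∀ v, ¬ Function.Injective fun i => c (v, i)) : ∃ f : V → Fin n, properCol G n f := by
  choose i j heq hij using fun v => Function.not_injective_iff.mp (h v)
  exact ⟨fun v => c (v, i v), fun u v huv => (hc.ne_of_fiber_eq huv (hij u) (heq u) (i v)).symm⟩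

variable [Fintype V] (hconn : G.Connected) (hchi : n < chrom G)
include hconn hchi

theorem injective_fiber (v : V) : Function.Injective fun i => c (v, i) := by
  by_contra hv
  obtain ⟨f, hf⟩ := hc.exists_properCol_of_not_injective_fiber
    (hconn.forall_of_adj_imp (fun _ _ huw => hc.not_injective_fiber_of_adj huw) hv)
  exact (chrom_le_of_properCol hf).not_gt hchi

theorem exists_perm : ∃ σ : Equiv.Perm (Fin n), ∀ (v : V) (i : Fin n), c (v, i) = σ i := by
  obtain ⟨v₀⟩ := hconn.nonempty
  have hbij (v : V) : Function.Bijective fun i => c (v, i) :=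
    Finite.injective_iff_bijective.mp (hc.injective_fiber hconn hchi v)
  refine ⟨Equiv.ofBijective _ (hbij v₀), hconn.forall_of_adj_imp ?_ (fun _ => rfl)⟩
  intro u w huw hu i
  exact (hc.fiber_eq_of_adj huw (hbij u).2 i).trans (hu i)

end properCol

theorem chrom_tensorProd_top {V : Type*} [Fintype V] {G : SimpleGraph V} {n : ℕ}
    (hconn : G.Connected) (hchi : n < chrom G) :
    chrom (tensorProd G (⊤ : SimpleGraph (Fin n))) = n := by
  refine le_antisymm (chrom_le_of_properCol (properCol_tensorProd_top_snd G n)) ?_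
  by_contra! hlt
  obtain ⟨c, hc⟩ := exists_properCol_chrom (properCol_tensorProd_top_snd G n)
  obtain ⟨σ, hσ⟩ := (hc.castLE hlt.le).exists_perm hconn hchi
  obtain ⟨v₀⟩ := hconn.nonempty
  have hval := congrArg Fin.val (hσ v₀ (σ.symm ⟨_, hlt⟩))
  simp only [Function.comp_apply, Fin.val_castLE, Equiv.apply_symm_apply] at hval
  exact (c _).isLt.ne hval

theorem stmt11 {V : Type*} [Fintype V] (G : SimpleGraph V) (n : ℕ)
    (hconn : G.Connected) (hchi : n < chrom G) :
    chrom (tensorProd G (⊤ : SimpleGraph (Fin n))) = n ∧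
    ∀ c : V × Fin n → Fin n,
      properCol (tensorProd G (⊤ : SimpleGraph (Fin n))) n c →
      ∃ σ : Equiv.Perm (Fin n), ∀ (v : V) (i : Fin n), c (v, i) = σ i :=
  ⟨chrom_tensorProd_top hconn hchi, fun _ hc => hc.exists_perm hconn hchi⟩
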